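/- Let G be a simple graph, let r and s be positive integers, and let e be 0 or 1. Suppose there exist G designs of orders r + e and s + e, and suppose there exist decompositions into G of the complete bipartite graphs K_{r,r} and K_{r,s}. Then for every integer t ≥ 0 there exists a G design of order t·r + s + e. -/

import Mathlib

open SimpleGraph

/-- `K.DecomposesInto G`: a decomposition of `K` into `G`, i.e. a partition of the
edge set of `K` into the edge sets of subgraphs of `K`, each isomorphic to `G`. -/
def SimpleGraph.DecomposesInto {V : Type*} {W : Type*} (K : SimpleGraph V)
    (G : SimpleGraph W) : Prop :=
  ∃ (ι : Type) (f : ι → K.Subgraph),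
    (∀ i, Nonempty (G ≃g (f i).coe)) ∧
    ∀ e ∈ K.edgeSet, ∃! i, e ∈ (f i).edgeSet

/-- A `G` design of order `n`: a decomposition of the complete graph `K_n` on `n`
vertices into `G`. -/
def SimpleGraph.HasDesign {W : Type*} (G : SimpleGraph W) (n : ℕ) : Prop :=
  (⊤ : SimpleGraph (Fin n)).DecomposesInto G

/-- The complete multipartite graph with parts of sizes `m 0, …, m (k-1)`. -/
def completeMultipartite {k : ℕ} (m : Fin k → ℕ) :
    SimpleGraph ((i : Fin k) × Fin (m i)) :=
  SimpleGraph.completeMultipartiteGraph fun i => Fin (m i)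

/-- The set of edges joining consecutive entries of a list of vertices. -/
def consecEdges (l : List ℕ) : Set (Sym2 ℕ) :=
  {e | ∃ p ∈ l.zip l.tail, e = s(p.1, p.2)}

/-- The vertex list of a path of length `len` from vertex `0` to vertex `1` whose
internal vertices are `start, start + 1, …, start + len - 2`. -/
def thetaPath (len start : ℕ) : List ℕ :=
  0 :: ((List.range (len - 1)).map (· + start) ++ [1])

/-- The theta graph `Θ(a,b,c)` on the vertex set `Fin (a+b+c-1)`: the two vertices
`0` and `1` of degree `3` are joined by three internally disjoint paths, of lengths
`a`, `b` and `c`, whose internal vertices are `2, …, a`, resp. `a+1, …, a+b-1`,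
resp. `a+b, …, a+b+c-2`. -/
def thetaGraph (a b c : ℕ) : SimpleGraph (Fin (a + b + c - 1)) :=
  (SimpleGraph.fromEdgeSet
    (consecEdges (thetaPath a 2) ∪ consecEdges (thetaPath b (a + 1)) ∪
      consecEdges (thetaPath c (a + b)))).comap Fin.val

/-! The construction is an induction on `t`. Split the vertices of `K_{(t+1)r+s+e}` as
`A ⊔ M ⊔ E` with `|A| = r`, `|M| = tr + s`, `|E| = e`. Its edges are partitioned into the
complete graphs on `A ∪ E` and on `M ∪ E` and the complete bipartite graph between `A` and `M`
(since `|E| ≤ 1`, no edge lies inside `E`). Likewise `K_{r,tr+s}` is split into `t` copies of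
`K_{r,r}` and one of `K_{r,s}`. -/

namespace SimpleGraph

variable {U V W : Type*} {G : SimpleGraph U}

lemma Copy.edgeSet_toSubgraph {K : SimpleGraph V} {K' : SimpleGraph W} (φ : Copy K K') :
    φ.toSubgraph.edgeSet = Sym2.map φ '' K.edgeSet :=
  Subgraph.edgeSet_map _ _

theorem DecomposesInto.of_copies {J : Type} {X : J → Type*} {K : ∀ j, SimpleGraph (X j)}
    {K' : SimpleGraph W} (φ : ∀ j, Copy (K j) K') (hK : ∀ j, (K j).DecomposesInto G)
    (hcover : ∀ e ∈ K'.edgeSet, ∃! j, e ∈ (φ j).toSubgraph.edgeSet) :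
    K'.DecomposesInto G := by
  choose ι f hiso hf using hK
  refine ⟨Σ j, ι j, fun p => (f p.1 p.2).map (φ p.1).toHom,
    fun p => ⟨(hiso p.1 p.2).some.trans ((φ p.1).isoSubgraphMap _)⟩, fun e he => ?_⟩
  obtain ⟨j, hj, hj_unique⟩ := hcover e he
  obtain ⟨e', he', rfl⟩ := (φ j).edgeSet_toSubgraph ▸ hj
  obtain ⟨i, hi, hi_unique⟩ := hf j e' he'
  refine ⟨⟨j, i⟩, (Subgraph.edgeSet_map _ _).ge ⟨e', hi, rfl⟩, ?_⟩
  rintro ⟨j', i'⟩ h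
  obtain ⟨e'', he'', heq⟩ := (Subgraph.edgeSet_map _ _).le h
  obtain rfl : j' = j := hj_unique j' <| (φ j').edgeSet_toSubgraph.ge
    ⟨e'', (f j' i').edgeSet_subset he'', heq⟩
  obtain rfl : e'' = e' := Sym2.map.injective (φ j').injective heq
  rw [hi_unique i' he'']

theorem DecomposesInto.of_copy {K : SimpleGraph V} {K' : SimpleGraph W} (φ : Copy K K')
    (h : K.DecomposesInto G) (hφ : K'.edgeSet ⊆ Sym2.map φ '' K.edgeSet) :
    K'.DecomposesInto G :=
  of_copies (J := Unit) (fun _ => φ) (fun _ => h) fun _ he =>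
    ⟨(), φ.edgeSet_toSubgraph.ge (hφ he), fun _ _ => rfl⟩

theorem DecomposesInto.of_iso {K : SimpleGraph V} {K' : SimpleGraph W} (φ : K ≃g K')
    (h : K.DecomposesInto G) : K'.DecomposesInto G :=
  h.of_copy φ.toCopy fun e he =>
    ⟨_, (φ.mapEdgeSet.symm ⟨e, he⟩).2, congrArg Subtype.val (φ.mapEdgeSet.apply_symm_apply _)⟩

theorem DecomposesInto.map {K : SimpleGraph V} (f : V ↪ W) (h : K.DecomposesInto G) :
    (K.map f).DecomposesInto G :=
  h.of_copy (Embedding.map f K).toCopy (edgeSet_map f K).le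

theorem DecomposesInto.sup {H₁ H₂ : SimpleGraph V} (h₁ : H₁.DecomposesInto G)
    (h₂ : H₂.DecomposesInto G) (hd : Disjoint H₁ H₂) : (H₁ ⊔ H₂).DecomposesInto G := by
  refine of_copies (J := Bool) (K := fun b => cond b H₁ H₂)
    (fun b => Copy.ofLE _ _ (by cases b <;> simp)) (fun b => by cases b <;> assumption) ?_
  intro e he
  have hd' := Set.disjoint_left.mp (disjoint_edgeSet.mpr hd)
  rw [edgeSet_sup] at he
  simp only [ExistsUnique, Bool.exists_bool, Bool.forall_bool]
  aesop

section Sum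

variable (A M N E : Type*)

theorem completeBipartiteGraph_sum_right_eq_sup :
    completeBipartiteGraph A (M ⊕ N) =
      (completeBipartiteGraph A M).map (Function.Embedding.sumMap (.refl A) .inl) ⊔
        (completeBipartiteGraph A N).map (Function.Embedding.sumMap (.refl A) .inr) := by
  ext (a | m | n) (b | m' | n') <;> simp only [map_adj, sup_adj] <;> simp

theorem top_sum_sum_eq_sup [Subsingleton E] :
    (⊤ : SimpleGraph (A ⊕ M ⊕ E)) =
      ((⊤ : SimpleGraph (A ⊕ E)).map (Function.Embedding.sumMap (.refl A) .inr) ⊔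
        (⊤ : SimpleGraph (M ⊕ E)).map Function.Embedding.inr) ⊔
      (completeBipartiteGraph A M).map (Function.Embedding.sumMap (.refl A) .inl) := by
  ext (a | m | x) (b | m' | y) <;> simp only [map_adj, sup_adj] <;> simp

variable {A M N E}

theorem DecomposesInto.completeBipartiteGraph_sum_right
    (hM : (completeBipartiteGraph A M).DecomposesInto G)
    (hN : (completeBipartiteGraph A N).DecomposesInto G) :
    (completeBipartiteGraph A (M ⊕ N)).DecomposesInto G := by
  rw [completeBipartiteGraph_sum_right_eq_sup]
  refine (hM.map _).sup (hN.map _) (disjoint_left.mpr ?_)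
  rintro (a | m | n) (b | m' | n') <;> simp only [map_adj] <;> simp

theorem DecomposesInto.top_sum_sum [Subsingleton E]
    (hAE : (⊤ : SimpleGraph (A ⊕ E)).DecomposesInto G)
    (hME : (⊤ : SimpleGraph (M ⊕ E)).DecomposesInto G)
    (hAM : (completeBipartiteGraph A M).DecomposesInto G) :
    (⊤ : SimpleGraph (A ⊕ M ⊕ E)).DecomposesInto G := by
  rw [top_sum_sum_eq_sup]
  refine ((hAE.map _).sup (hME.map _) (disjoint_left.mpr ?_)).sup (hAM.map _)
    (disjoint_left.mpr ?_) <;>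
  rintro (a | m | x) (b | m' | y) <;> simp only [map_adj, sup_adj] <;>
    simp [eq_iff_true_of_subsingleton]

end Sum

theorem hasDesign_iff_of_card_eq {X : Type*} [Fintype X] {n : ℕ} (hX : Fintype.card X = n) :
    G.HasDesign n ↔ (⊤ : SimpleGraph X).DecomposesInto G :=
  ⟨.of_iso (Iso.completeGraph (Fintype.equivFinOfCardEq hX).symm),
    .of_iso (Iso.completeGraph (Fintype.equivFinOfCardEq hX))⟩

theorem DecomposesInto.completeBipartiteGraph_fin_add {a m n : ℕ}
    (hm : (completeBipartiteGraph (Fin a) (Fin m)).DecomposesInto G)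
    (hn : (completeBipartiteGraph (Fin a) (Fin n)).DecomposesInto G) :
    (completeBipartiteGraph (Fin a) (Fin (m + n))).DecomposesInto G :=
  (hm.completeBipartiteGraph_sum_right hn).of_iso
    (completeBipartiteGraphCongr (.refl _) finSumFinEquiv)

theorem hasDesign_add {a m e : ℕ} (he : e ≤ 1) (hae : G.HasDesign (a + e))
    (hme : G.HasDesign (m + e))
    (ham : (completeBipartiteGraph (Fin a) (Fin m)).DecomposesInto G) :
    G.HasDesign (a + m + e) := by
  have : Subsingleton (Fin e) := Fin.subsingleton_iff_le_one.mpr he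
  refine (hasDesign_iff_of_card_eq (X := Fin a ⊕ Fin m ⊕ Fin e) (by simp [add_assoc])).mpr ?_
  exact DecomposesInto.top_sum_sum ((hasDesign_iff_of_card_eq (by simp)).mp hae)
    ((hasDesign_iff_of_card_eq (by simp)).mp hme) ham

end SimpleGraph

theorem bipartite_construction_alt_general {V : Type*} (G : SimpleGraph V)
    (r s e : ℕ) (he : e = 0 ∨ e = 1)
    (h1 : G.HasDesign (r + e))
    (h2 : G.HasDesign (s + e))
    (h3 : (completeBipartiteGraph (Fin r) (Fin r)).DecomposesInto G)
    (h4 : (completeBipartiteGraph (Fin r) (Fin s)).DecomposesInto G)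
    (t : ℕ) :
    G.HasDesign (t * r + s + e) := by
  have hbip : ∀ t, (completeBipartiteGraph (Fin r) (Fin (t * r + s))).DecomposesInto G := by
    intro t
    induction t with
    | zero => rwa [zero_mul, zero_add]
    | succ t ih =>
      rw [show (t + 1) * r + s = r + (t * r + s) by ring]
      exact h3.completeBipartiteGraph_fin_add ih
  induction t with
  | zero => simpa using h2
  | succ t ih =>
    rw [show (t + 1) * r + s = r + (t * r + s) by ring]
    exact hasDesign_add (by omega) h1 ih (hbip t)

theorem bipartite_construction_alt {V : Type*} (G : SimpleGraph V)
    (r s e : ℕ) (hr : 0 < r) (hs : 0 < s) (he : e = 0 ∨ e = 1)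
    (h1 : G.HasDesign (r + e))
    (h2 : G.HasDesign (s + e))
    (h3 : (completeBipartiteGraph (Fin r) (Fin r)).DecomposesInto G)
    (h4 : (completeBipartiteGraph (Fin r) (Fin s)).DecomposesInto G)
    (t : ℕ) :
    G.HasDesign (t * r + s + e) :=
  bipartite_construction_alt_general G r s e he h1 h2 h3 h4 t
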